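/- arXiv:math/0603053 — 4 statements merged into one kernel-verified Lean document; each statement's English description precedes it below -/
import Mathlib

section
/- Let k ≥ 2 be an integer, let a₁, …, a_k be positive integers, and let b₁, …, b_k be integers. Assume that a_i·b_j ≠ a_j·b_i for every 1 ≤ i < j ≤ k. Then the set of positive integers n for which φ(a₁n+b₁) > φ(a₂n+b₂) > ⋯ > φ(a_k n+b_k) (with all a_jn+b_j positive) has positive lower density. -/
/-!
Choose pairwise disjoint finite sets `P₀, …, P_{k-1}` of primes, all larger than the coefficients
and than every `|aᵢbⱼ - aⱼbᵢ|`, whose products `δⱼ = ∏_{p ∈ Pⱼ} (1 - 1/p)` drop by a large factor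
from one set to the next; this is possible because `∑ 1/p` diverges. By the Chinese remainder
theorem there is a progression `n ≡ r (mod M)` on which the primes of `Pⱼ` divide `aⱼn + bⱼ`,
and by the size of these primes they divide no other form. On it
`φ(aⱼn + bⱼ) ≤ (aⱼn + bⱼ) δⱼ`, while the prime factors of `aⱼn + bⱼ` outside the `Pᵢ` and the
small primes only cost a factor `exp (-2 Xⱼ(n))`, where `Xⱼ(n)` is the sum of their reciprocals.
The average of `Xⱼ(n)` over the progression is bounded, so by Markov's inequality all `Xⱼ(n)`
are small for at least half of its elements, and for those the totients decrease.
-/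

open scoped Classical in
/-- The lower density of a set of positive integers:
`liminf_{x→∞} #{n ∈ S : n ≤ x} / x`. -/
noncomputable def lowerDensity (S : Set ℕ) : ℝ :=
  Filter.atTop.liminf fun x : ℕ =>
    (((Finset.Icc 1 x).filter (fun n => n ∈ S)).card : ℝ) / x

open Finset Real Function

lemma one_sub_inv_natCast_nonneg (q : ℕ) : 0 ≤ 1 - (q : ℝ)⁻¹ := by
  rcases q.eq_zero_or_pos with rfl | hq
  · simp
  · exact sub_nonneg.2 (inv_le_one_of_one_le₀ (by exact_mod_cast hq))

lemma one_sub_inv_natCast_le_one (q : ℕ) : 1 - (q : ℝ)⁻¹ ≤ 1 :=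
  sub_le_self _ (by positivity)

lemma prod_one_sub_inv_pos {s : Finset ℕ} (hs : ∀ p ∈ s, p.Prime) :
    0 < ∏ p ∈ s, (1 - (p : ℝ)⁻¹) :=
  prod_pos fun p hp => sub_pos.2 (inv_lt_one_of_one_lt₀ (by exact_mod_cast (hs p hp).one_lt))

lemma prod_one_sub_inv_le_of_subset {s t : Finset ℕ} (h : s ⊆ t) :
    ∏ p ∈ t, (1 - (p : ℝ)⁻¹) ≤ ∏ p ∈ s, (1 - (p : ℝ)⁻¹) :=
  prod_le_prod_of_subset_of_le_one h (fun q _ => one_sub_inv_natCast_nonneg q)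
    fun q _ _ => one_sub_inv_natCast_le_one q

lemma Nat.totient_eq_mul_prod_one_sub_inv (m : ℕ) :
    (m.totient : ℝ) = m * ∏ p ∈ m.primeFactors, (1 - (p : ℝ)⁻¹) := by
  have h := congrArg (Rat.cast : ℚ → ℝ) (Nat.totient_eq_mul_prod_factors m)
  push_cast at h
  exact h

lemma Nat.totient_le_mul_prod_of_subset {m : ℕ} {P : Finset ℕ} (hP : P ⊆ m.primeFactors) :
    (m.totient : ℝ) ≤ m * ∏ p ∈ P, (1 - (p : ℝ)⁻¹) := by
  rw [Nat.totient_eq_mul_prod_one_sub_inv]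
  exact mul_le_mul_of_nonneg_left (prod_one_sub_inv_le_of_subset hP) m.cast_nonneg

lemma exp_neg_two_mul_le_one_sub {x : ℝ} (hx₀ : 0 ≤ x) (hx : x ≤ 1 / 2) :
    exp (-2 * x) ≤ 1 - x := by
  have h₁ : 0 < 1 - x := by linarith
  rw [← exp_log h₁, exp_le_exp]
  have hlog := one_sub_inv_le_log_of_pos h₁
  have : -2 * x ≤ 1 - (1 - x)⁻¹ := by
    rw [le_sub_iff_add_le, ← le_sub_iff_add_le', inv_le_iff_one_le_mul₀ h₁]
    nlinarith
  linarith

lemma exp_neg_two_mul_sum_inv_le_prod {s : Finset ℕ} (hs : ∀ q ∈ s, 2 ≤ q) :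
    exp (-2 * ∑ q ∈ s, (q : ℝ)⁻¹) ≤ ∏ q ∈ s, (1 - (q : ℝ)⁻¹) := by
  rw [mul_sum, exp_sum]
  refine prod_le_prod (fun _ _ => (exp_pos _).le) fun q hq => ?_
  have hq : (2 : ℝ) ≤ q := by exact_mod_cast hs q hq
  exact exp_neg_two_mul_le_one_sub (by positivity) (by rw [one_div]; exact inv_anti₀ two_pos hq)

noncomputable def sumInvPrimeFactorsOutside (E : Finset ℕ) (m : ℕ) : ℝ :=
  ∑ q ∈ m.primeFactors \ E, (q : ℝ)⁻¹

lemma Nat.mul_prod_mul_exp_le_totient {m : ℕ} {E W : Finset ℕ} (h : m.primeFactors ∩ E ⊆ W) :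
    m * (∏ p ∈ W, (1 - (p : ℝ)⁻¹)) * exp (-2 * sumInvPrimeFactorsOutside E m) ≤ m.totient := by
  rw [Nat.totient_eq_mul_prod_one_sub_inv, ← prod_inter_mul_prod_sdiff m.primeFactors E, mul_assoc]
  refine mul_le_mul_of_nonneg_left ?_ m.cast_nonneg
  exact mul_le_mul (prod_one_sub_inv_le_of_subset h)
    (exp_neg_two_mul_sum_inv_le_prod fun q hq =>
      (Nat.prime_of_mem_primeFactors (mem_sdiff.1 hq).1).two_le)
    (exp_pos _).le (prod_nonneg fun q _ => one_sub_inv_natCast_nonneg q)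

lemma not_summable_inv_primes_gt (G : ℕ) :
    ¬ Summable ({p : ℕ | p.Prime ∧ G < p}.indicator fun n : ℕ => (n : ℝ)⁻¹) := by
  intro h
  refine not_summable_one_div_on_primes ((summable_nat_add_iff (G + 1)).1 ?_)
  refine (summable_nat_add_iff (G + 1)).2 h |>.congr fun n => ?_
  simp [Set.indicator_apply, one_div, show G < n + (G + 1) by omega]

lemma exists_primes_gt_prod_lt (G : ℕ) {ε : ℝ} (hε : 0 < ε) :
    ∃ Q : Finset ℕ, (∀ p ∈ Q, p.Prime ∧ G < p) ∧ ∏ p ∈ Q, (1 - (p : ℝ)⁻¹) < ε := by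
  classical
  obtain ⟨u, hu⟩ : ∃ u : Finset ℕ, -log ε < ∑ n ∈ u,
      {p : ℕ | p.Prime ∧ G < p}.indicator (fun n : ℕ => (n : ℝ)⁻¹) n := by
    by_contra! h
    exact not_summable_inv_primes_gt G
      (summable_of_sum_le (Set.indicator_nonneg fun n _ => by positivity) h)
  refine ⟨{p ∈ u | p.Prime ∧ G < p}, fun p hp => (mem_filter.1 hp).2, ?_⟩
  rw [sum_indicator_eq_sum_filter] at hu
  calc ∏ p ∈ {p ∈ u | p.Prime ∧ G < p}, (1 - (p : ℝ)⁻¹)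
      ≤ ∏ p ∈ {p ∈ u | p.Prime ∧ G < p}, exp (-(p : ℝ)⁻¹) :=
        prod_le_prod (fun q _ => one_sub_inv_natCast_nonneg q) fun q _ => one_sub_le_exp_neg _
    _ = exp (-∑ p ∈ {p ∈ u | p.Prime ∧ G < p}, (p : ℝ)⁻¹) := by rw [← exp_sum, sum_neg_distrib]
    _ < exp (log ε) := exp_lt_exp.2 (by simpa using neg_lt.1 hu)
    _ = ε := exp_log hε

lemma exists_prime_blocks (G m : ℕ) {ρ : ℝ} (hρ : 0 < ρ) :
    ∃ P : ℕ → Finset ℕ, (∀ j, ∀ p ∈ P j, p.Prime ∧ G < p) ∧ Pairwise (Disjoint on P) ∧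
      ∀ j, j + 1 < m → ∏ p ∈ P (j + 1), (1 - (p : ℝ)⁻¹) < ρ * ∏ p ∈ P j, (1 - (p : ℝ)⁻¹) := by
  induction m with
  | zero => exact ⟨fun _ => ∅, by simp, fun _ _ _ => disjoint_empty_left _, by simp⟩
  | succ m ih =>
    obtain ⟨P, hPp, hPd, hPδ⟩ := ih
    obtain ⟨B, hB⟩ := ((range m).biUnion P).exists_le
    obtain ⟨Q, hQp, hQδ⟩ := exists_primes_gt_prod_lt (G + B)
      (mul_pos hρ (prod_one_sub_inv_pos fun p hp => (hPp (m - 1) p hp).1))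
    have hQ : ∀ i < m, Disjoint (P i) Q := fun i hi => disjoint_left.2 fun p hp hpQ => by
      have := hB p (mem_biUnion.2 ⟨i, mem_range.2 hi, hp⟩)
      have := (hQp p hpQ).2
      omega
    refine ⟨fun j => if j < m then P j else if j = m then Q else ∅, ?_, ?_, ?_⟩
    · intro j p hp
      dsimp only at hp
      split_ifs at hp with h₁ h₂
      · exact hPp j p hp
      · exact ⟨(hQp p hp).1, by have := (hQp p hp).2; omega⟩
      · simp at hp
    · intro i j hij
      simp only [Function.onFun]
      split_ifs <;> first
        | exact disjoint_empty_left _ | exact disjoint_empty_right _ | exact hPd hij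
        | exact hQ i ‹_› | exact (hQ j ‹_›).symm | exact absurd (by omega) hij
    · intro j hj
      rcases Nat.lt_or_ge (j + 1) m with h | h
      · simpa [h, show j < m by omega] using hPδ j h
      · obtain rfl : j + 1 = m := by omega
        simpa using hQδ

lemma exists_modEq_dvd_mul_add {m a : ℕ} (hm : m ≠ 0) (h : a.Coprime m) (b : ℤ) :
    ∃ c : ℕ, ∀ n : ℕ, n ≡ c [MOD m] → (m : ℤ) ∣ a * n + b := by
  have : NeZero m := ⟨hm⟩
  set u := ZMod.unitOfCoprime a h
  refine ⟨(-b * (u⁻¹ : (ZMod m)ˣ) : ZMod m).val, fun n hn => ?_⟩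
  rw [← ZMod.intCast_zmod_eq_zero_iff_dvd]
  have hn : (n : ZMod m) = -b * (u⁻¹ : (ZMod m)ˣ) := by
    rw [(ZMod.natCast_eq_natCast_iff _ _ _).2 hn, ZMod.natCast_zmod_val]
  have hu : (a : ZMod m) * (u⁻¹ : (ZMod m)ˣ) = 1 := u.mul_inv
  push_cast
  rw [hn, ← mul_assoc, mul_comm (a : ZMod m), mul_assoc, hu]
  ring

lemma exists_modEq_prod_forall_dvd {k : ℕ} {a : ℕ → ℕ} (b : ℕ → ℤ) {P : ℕ → Finset ℕ}
    (hP : ∀ j, ∀ p ∈ P j, p.Prime) (hdisj : Pairwise (Disjoint on P))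
    (ha : ∀ j < k, ∀ p ∈ P j, ¬ p ∣ a j) :
    ∃ r : ℕ, ∀ n : ℕ, n ≡ r [MOD ∏ j ∈ range k, ∏ p ∈ P j, p] →
      ∀ j < k, ∀ p ∈ P j, (p : ℤ) ∣ a j * n + b j := by
  have hs : ∀ j, ∏ p ∈ P j, p ≠ 0 := fun j => prod_ne_zero_iff.2 fun p hp => (hP j p hp).ne_zero
  have hc : ∀ j, ∃ c : ℕ, j < k →
      ∀ n : ℕ, n ≡ c [MOD ∏ p ∈ P j, p] → ((∏ p ∈ P j, p : ℕ) : ℤ) ∣ a j * n + b j := by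
    intro j
    by_cases hj : j < k
    · obtain ⟨c, hc⟩ := exists_modEq_dvd_mul_add (hs j) (Nat.Coprime.prod_right fun p hp =>
        ((Nat.Prime.coprime_iff_not_dvd (hP j p hp)).2 (ha j hj p hp)).symm) (b j)
      exact ⟨c, fun _ => hc⟩
    · exact ⟨0, fun h => absurd h hj⟩
  choose c hc using hc
  have hcop : Set.Pairwise (range k : Set ℕ) (Nat.Coprime on fun j => ∏ p ∈ P j, p) :=
    fun i _ j _ hij => Nat.Coprime.prod_right fun q hq => Nat.Coprime.prod_left fun p hp =>
      (Nat.coprime_primes (hP i p hp) (hP j q hq)).2 fun hpq =>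
        disjoint_left.1 (hdisj hij) hp (hpq ▸ hq)
  obtain ⟨r, hr⟩ := Nat.chineseRemainderOfFinset c _ (range k) (fun j _ => hs j) hcop
  refine ⟨r, fun n hn j hj p hp => ?_⟩
  have hdvd := dvd_prod_of_mem (fun j => ∏ p ∈ P j, p) (mem_range.2 hj)
  refine (Int.natCast_dvd_natCast.2 (dvd_prod_of_mem _ hp)).trans (hc j hj n ?_)
  exact (hn.of_dvd hdvd).trans (hr j (mem_range.2 hj))

lemma dvd_mul_sub_mul_of_dvd_mul_add {p α α' β β' n : ℤ} (h : p ∣ α * n + β)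
    (h' : p ∣ α' * n + β') : p ∣ α * β' - α' * β := by
  have := dvd_sub (h'.mul_left α) (h.mul_left α')
  rwa [show α * (α' * n + β') - α' * (α * n + β) = α * β' - α' * β by ring] at this

lemma Nat.modEq_of_dvd_mul_add {q α n n' : ℕ} {β : ℤ} (hq : q.Prime) (hqα : ¬ q ∣ α)
    (h : (q : ℤ) ∣ α * n + β) (h' : (q : ℤ) ∣ α * n' + β) : n ≡ n' [MOD q] := by
  have := _root_.dvd_sub h' h
  rw [show (α : ℤ) * n' + β - (α * n + β) = α * (n' - n) by ring] at this
  exact Nat.modEq_iff_dvd.2 ((Int.Prime.dvd_mul' hq this).resolve_left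
    (by exact_mod_cast hqα))

lemma card_le_div_add_one_of_modEq {S : Finset ℕ} {x d : ℕ} (hS : ∀ n ∈ S, n ≤ x)
    (h : ∀ m ∈ S, ∀ n ∈ S, m ≡ n [MOD d]) : (#S : ℝ) ≤ x / d + 1 := by
  have hcard : #S ≤ x / d + 1 := by
    refine (card_le_card_of_injOn (· / d) (t := range (x / d + 1)) (fun n hn => ?_)
      fun m hm n hn hmn => ?_).trans (card_range _).le
    · exact mem_range.2 (Nat.lt_succ_of_le (Nat.div_le_div_right (hS n hn)))
    · rw [← Nat.div_add_mod m d, ← Nat.div_add_mod n d]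
      simp only at hmn
      rw [hmn, h m hm n hn]
  calc (#S : ℝ) ≤ (x / d : ℕ) + 1 := by exact_mod_cast hcard
    _ ≤ x / d + 1 := by gcongr; exact Nat.cast_div_le

lemma div_sub_one_lt_card_filter_modEq (x r : ℕ) {M : ℕ} (hM : 0 < M) :
    (x : ℝ) / M - 1 < #{n ∈ range (x + 1) | n ≡ r [MOD M]} := by
  rw [← Nat.count_eq_card_filter_range, Nat.count_modEq_card _ hM]
  calc (x : ℝ) / M - 1 < ⌊(x : ℝ) / M⌋₊ := Nat.sub_one_lt_floor _
    _ ≤ _ := by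
      rw [Nat.floor_div_eq_div]
      exact_mod_cast (Nat.div_le_div_right (Nat.le_succ x)).trans (Nat.le_add_right _ _)

lemma Finset.card_filter_lt_mul_le_sum {ι : Type*} (A : Finset ι) {f : ι → ℝ}
    (hf : ∀ i ∈ A, 0 ≤ f i) (T : ℝ) : #{i ∈ A | T < f i} * T ≤ ∑ i ∈ A, f i := by
  calc #{i ∈ A | T < f i} * T ≤ ∑ i ∈ A with T < f i, f i := by
        simpa using card_nsmul_le_sum _ f T fun i hi => (mem_filter.1 hi).2.le
    _ ≤ ∑ i ∈ A, f i := sum_le_sum_of_subset_of_nonneg (filter_subset _ _) fun i hi _ => hf i hi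

lemma sum_inv_sq_le_one {V : Finset ℕ} (hV : ∀ q ∈ V, 2 ≤ q) : ∑ q ∈ V, ((q : ℝ) ^ 2)⁻¹ ≤ 1 := by
  obtain ⟨B, hB⟩ := V.exists_le
  calc ∑ q ∈ V, ((q : ℝ) ^ 2)⁻¹ ≤ ∑ q ∈ Ioo 1 (B + 1), ((q : ℝ) ^ 2)⁻¹ :=
        sum_le_sum_of_subset_of_nonneg
          (fun q hq => mem_Ioo.2 ⟨hV q hq, Nat.lt_succ_of_le (hB q hq)⟩) fun _ _ _ => by positivity
    _ ≤ 2 / ((1 : ℕ) + 1) := sum_Ioo_inv_sq_le 1 (B + 1)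
    _ = 1 := by norm_num

lemma sum_inv_le_two_sqrt {V : Finset ℕ} {N : ℕ} (hV : ∀ q ∈ V, q ≤ N) :
    ∑ q ∈ V, (q : ℝ)⁻¹ ≤ 2 * √N := by
  have hharm : ∑ q ∈ V, (q : ℝ)⁻¹ ≤ harmonic N := by
    calc ∑ q ∈ V, (q : ℝ)⁻¹ ≤ ∑ q ∈ range (N + 1), (q : ℝ)⁻¹ :=
          sum_le_sum_of_subset_of_nonneg (fun q hq => mem_range.2 (Nat.lt_succ_of_le (hV q hq)))
            fun _ _ _ => by positivity
      _ = harmonic N := by simp [harmonic, sum_range_succ']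
  rcases N.eq_zero_or_pos with rfl | hN
  · simpa using hharm
  have hlog := log_le_sub_one_of_pos (sqrt_pos.2 (Nat.cast_pos.2 hN))
  rw [log_sqrt (Nat.cast_nonneg N)] at hlog
  have := harmonic_le_one_add_log N
  linarith

lemma Int.mem_primeFactors_toNat {q : ℕ} {z : ℤ} :
    q ∈ z.toNat.primeFactors ↔ q.Prime ∧ (q : ℤ) ∣ z ∧ 0 < z := by
  rw [Nat.mem_primeFactors, Ne, Int.toNat_eq_zero, not_le]
  refine and_congr_right fun _ => ⟨fun ⟨h, hz⟩ => ⟨?_, hz⟩, fun ⟨h, hz⟩ => ⟨?_, hz⟩⟩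
  · simpa [Int.toNat_of_nonneg hz.le] using Int.natCast_dvd_natCast.2 h
  · exact Int.natCast_dvd_natCast.1 (by rwa [Int.toNat_of_nonneg hz.le])

lemma card_filter_modEq_dvd_le {M x α r q : ℕ} {β : ℤ} (hq : q.Prime) (hqM : q.Coprime M)
    (hqα : ¬ q ∣ α) :
    (#{n ∈ range (x + 1) | n ≡ r [MOD M] ∧ (q : ℤ) ∣ α * n + β} : ℝ) ≤ x / (M * q) + 1 := by
  rw [← Nat.cast_mul]
  refine card_le_div_add_one_of_modEq (fun n hn => ?_) fun m hm n hn => ?_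
  · exact Nat.lt_succ_iff.1 (mem_range.1 (mem_filter.1 hn).1)
  simp only [mem_filter] at hm hn
  exact (Nat.modEq_and_modEq_iff_modEq_mul hqM.symm).1
    ⟨hm.2.1.trans hn.2.1.symm, Nat.modEq_of_dvd_mul_add hq hqα hm.2.2 hn.2.2⟩

lemma sum_sumInvPrimeFactorsOutside_le {M x N α r : ℕ} {β : ℤ} {E : Finset ℕ}
    (hE : ∀ q, q.Prime → q ∉ E → q.Coprime M ∧ ¬ q ∣ α)
    (hN : ∀ n ≤ x, ((α : ℤ) * n + β).toNat ≤ N) :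
    ∑ n ∈ range (x + 1) with n ≡ r [MOD M], sumInvPrimeFactorsOutside E ((α : ℤ) * n + β).toNat
      ≤ x / M + 2 * √N := by
  set A := {n ∈ range (x + 1) | n ≡ r [MOD M]}
  set F : ℕ → Finset ℕ := fun n => ((α : ℤ) * n + β).toNat.primeFactors \ E
  have hA : ∀ n ∈ A, n ≤ x ∧ n ≡ r [MOD M] := fun n hn => by
    simpa [A, Nat.lt_succ_iff] using hn
  have hU : ∀ q ∈ A.biUnion F, q.Prime ∧ q ∉ E ∧ q ≤ N := by
    simp only [mem_biUnion, F, mem_sdiff]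
    rintro q ⟨n, hn, hq, hqE⟩
    exact ⟨Nat.prime_of_mem_primeFactors hq, hqE,
      (Nat.le_of_mem_primeFactors hq).trans (hN n (hA n hn).1)⟩
  have hcount : ∀ q ∈ A.biUnion F, (#{n ∈ A | q ∈ F n} : ℝ) ≤ x / (M * q) + 1 := by
    intro q hq
    obtain ⟨hqp, hqE, -⟩ := hU q hq
    obtain ⟨hqM, hqα⟩ := hE q hqp hqE
    refine le_trans ?_ (card_filter_modEq_dvd_le (x := x) (r := r) (β := β) hqp hqM hqα)
    refine Nat.cast_le.2 (card_le_card fun n hn => ?_)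
    simp only [A, F, mem_filter, mem_sdiff, Int.mem_primeFactors_toNat] at hn ⊢
    exact ⟨hn.1.1, hn.1.2, hn.2.1.2.1⟩
  calc ∑ n ∈ A, sumInvPrimeFactorsOutside E ((α : ℤ) * n + β).toNat
      = ∑ q ∈ A.biUnion F, ∑ n ∈ A with q ∈ F n, (q : ℝ)⁻¹ :=
        sum_comm' fun n q =>
          ⟨fun h => ⟨mem_filter.2 h, mem_biUnion.2 ⟨n, h⟩⟩, fun h => mem_filter.1 h.1⟩
    _ = ∑ q ∈ A.biUnion F, #{n ∈ A | q ∈ F n} * (q : ℝ)⁻¹ := by simp [sum_const]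
    _ ≤ ∑ q ∈ A.biUnion F, (x / M * ((q : ℝ) ^ 2)⁻¹ + (q : ℝ)⁻¹) := sum_le_sum fun q hq => by
        calc _ ≤ (x / (M * q) + 1) * (q : ℝ)⁻¹ := by gcongr; exact hcount q hq
          _ = _ := by ring
    _ = x / M * ∑ q ∈ A.biUnion F, ((q : ℝ) ^ 2)⁻¹ + ∑ q ∈ A.biUnion F, (q : ℝ)⁻¹ := by
        rw [sum_add_distrib, mul_sum]
    _ ≤ x / M * 1 + 2 * √N := by
        gcongr
        · exact sum_inv_sq_le_one fun q hq => (hU q hq).1.two_le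
        · exact sum_inv_le_two_sqrt fun q hq => (hU q hq).2.2
    _ = x / M + 2 * √N := by ring

lemma card_filter_exists_lt_le {k M x N r : ℕ} {a : ℕ → ℕ} {b : ℕ → ℤ} {E : Finset ℕ} {T : ℝ}
    (hT : 0 < T) (hE : ∀ q, q.Prime → q ∉ E → q.Coprime M ∧ ∀ j < k, ¬ q ∣ a j)
    (hN : ∀ j < k, ∀ n ≤ x, ((a j : ℤ) * n + b j).toNat ≤ N) :
    (#{n ∈ range (x + 1) | n ≡ r [MOD M] ∧
      ∃ j < k, T < sumInvPrimeFactorsOutside E ((a j : ℤ) * n + b j).toNat} : ℝ)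
      ≤ k * ((x / M + 2 * √N) / T) := by
  set A := {n ∈ range (x + 1) | n ≡ r [MOD M]}
  set X := fun (j n : ℕ) => sumInvPrimeFactorsOutside E ((a j : ℤ) * n + b j).toNat
  have hsub : {n ∈ range (x + 1) | n ≡ r [MOD M] ∧ ∃ j < k, T < X j n}
      ⊆ (range k).biUnion fun j => {n ∈ A | T < X j n} := by
    intro n hn
    simp only [mem_filter, mem_biUnion, mem_range, A] at hn ⊢
    obtain ⟨hn, hr, j, hj, hX⟩ := hn
    exact ⟨j, hj, ⟨hn, hr⟩, hX⟩
  have hbad : ∀ j < k, (#{n ∈ A | T < X j n} : ℝ) ≤ (x / M + 2 * √N) / T := fun j hj => by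
    rw [le_div_iff₀ hT]
    exact (card_filter_lt_mul_le_sum A (fun n _ => sum_nonneg fun q _ => by positivity) T).trans
      (sum_sumInvPrimeFactorsOutside_le (fun q hq hqE => ⟨(hE q hq hqE).1, (hE q hq hqE).2 j hj⟩)
        (hN j hj))
  calc (#{n ∈ range (x + 1) | n ≡ r [MOD M] ∧ ∃ j < k, T < X j n} : ℝ)
      ≤ ∑ j ∈ range k, (#{n ∈ A | T < X j n} : ℝ) := by
        exact_mod_cast (card_le_card hsub).trans card_biUnion_le
    _ ≤ ∑ _j ∈ range k, (x / M + 2 * √N) / T := sum_le_sum fun j hj => hbad j (mem_range.1 hj)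
    _ = k * ((x / M + 2 * √N) / T) := by simp

lemma exists_coeff_bound (k : ℕ) (a : ℕ → ℕ) (b : ℕ → ℤ) : ∃ G : ℕ, ∀ i < k, ∀ j < k,
    a j + (b j).natAbs + ((a i : ℤ) * b j - a j * b i).natAbs ≤ G := by
  obtain ⟨G, hG⟩ := ((range k ×ˢ range k).image fun ij : ℕ × ℕ =>
    a ij.2 + (b ij.2).natAbs + ((a ij.1 : ℤ) * b ij.2 - a ij.2 * b ij.1).natAbs).exists_le
  exact ⟨G, fun i hi j hj =>
    hG _ (mem_image.2 ⟨(i, j), mem_product.2 ⟨mem_range.2 hi, mem_range.2 hj⟩, rfl⟩)⟩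

lemma toNat_mul_add_le {α G n : ℕ} {β : ℤ} (hα : α ≤ G) (hβ : β.natAbs ≤ G) :
    ((α : ℤ) * n + β).toNat ≤ G * (n + 1) := by
  refine Int.toNat_le.2 ?_
  have hβ' : β ≤ G := (Int.le_natAbs).trans (by exact_mod_cast hβ)
  have : (α : ℤ) * n ≤ G * n := by gcongr
  push_cast
  linarith

lemma mul_add_pos_and_le_two_mul_toNat {α G n : ℕ} {β : ℤ} (hα : 0 < α) (hβ : β.natAbs ≤ G)
    (hn : 2 * G + 1 ≤ n) : 0 < (α : ℤ) * n + β ∧ n ≤ 2 * ((α : ℤ) * n + β).toNat := by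
  have h₁ : (n : ℤ) ≤ α * n := le_mul_of_one_le_left (by positivity) (by exact_mod_cast hα)
  have hβ' : -(G : ℤ) ≤ β := neg_le_of_abs_le (by rw [Int.abs_eq_natAbs]; exact_mod_cast hβ)
  have hn' : (2 * G + 1 : ℤ) ≤ n := by exact_mod_cast hn
  have hpos : 0 < (α : ℤ) * n + β := by linarith
  refine ⟨hpos, ?_⟩
  zify
  rw [Int.toNat_of_nonneg hpos.le]
  linarith

lemma totient_lt_totient_of_prime_blocks {m m' : ℕ} {P P' L E : Finset ℕ} {c T : ℝ}
    (hm' : 0 < m') (hc : 0 < c) (hsize : (m' : ℝ) ≤ c * m) (hP' : P' ⊆ m'.primeFactors)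
    (hm : m.primeFactors ∩ E ⊆ P ∪ L) (hPL : Disjoint P L) (hP : ∀ p ∈ P, p.Prime)
    (hδ : ∏ p ∈ P', (1 - (p : ℝ)⁻¹) <
      (∏ p ∈ L, (1 - (p : ℝ)⁻¹)) * exp (-2 * T) / c * ∏ p ∈ P, (1 - (p : ℝ)⁻¹))
    (hX : sumInvPrimeFactorsOutside E m ≤ T) :
    m'.totient < m.totient := by
  set δ := ∏ p ∈ P, (1 - (p : ℝ)⁻¹)
  set c₀ := ∏ p ∈ L, (1 - (p : ℝ)⁻¹)
  have hδ₀ : 0 < δ := prod_one_sub_inv_pos hP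
  have hc₀ : 0 ≤ c₀ := prod_nonneg fun p _ => one_sub_inv_natCast_nonneg p
  have h : (m'.totient : ℝ) < m.totient := calc
    (m'.totient : ℝ) ≤ m' * ∏ p ∈ P', (1 - (p : ℝ)⁻¹) := Nat.totient_le_mul_prod_of_subset hP'
    _ < m' * (c₀ * exp (-2 * T) / c * δ) := mul_lt_mul_of_pos_left hδ (by exact_mod_cast hm')
    _ ≤ c * m * (c₀ * exp (-2 * T) / c * δ) := by gcongr
    _ = m * (c₀ * exp (-2 * T)) * δ := by field_simp
    _ ≤ m * (c₀ * exp (-2 * sumInvPrimeFactorsOutside E m)) * δ := by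
        gcongr m * (c₀ * ?_) * δ
        exact exp_le_exp.2 (by linarith)
    _ = m * (∏ p ∈ P ∪ L, (1 - (p : ℝ)⁻¹)) * exp (-2 * sumInvPrimeFactorsOutside E m) := by
        rw [prod_union hPL]; ring
    _ ≤ m.totient := Nat.mul_prod_mul_exp_le_totient hm
  exact_mod_cast h

lemma primeFactors_inter_subset_block {k G j n : ℕ} {a : ℕ → ℕ} {b : ℕ → ℤ} {P : ℕ → Finset ℕ}
    (hP : ∀ i, ∀ p ∈ P i, G < p)
    (hcross : ∀ i < k, i ≠ j → (a i : ℤ) * b j - a j * b i ≠ 0 ∧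
      ((a i : ℤ) * b j - a j * b i).natAbs ≤ G)
    (hdvd : ∀ i < k, ∀ p ∈ P i, (p : ℤ) ∣ a i * n + b i) (hj : j < k) :
    ((a j : ℤ) * n + b j).toNat.primeFactors ∩ ((range k).biUnion P ∪ range (G + 1))
      ⊆ P j ∪ (G + 1).primesBelow := by
  intro p hp
  obtain ⟨hpf, hpE⟩ := mem_inter.1 hp
  obtain ⟨hpp, hpj, -⟩ := Int.mem_primeFactors_toNat.1 hpf
  rcases mem_union.1 hpE with hpP | hpG
  · obtain ⟨i, hi, hpi⟩ := mem_biUnion.1 hpP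
    rcases eq_or_ne i j with rfl | hij
    · exact mem_union_left _ hpi
    · obtain ⟨hne, hle⟩ := hcross i (mem_range.1 hi) hij
      have := Int.natAbs_dvd_natAbs.2
        (dvd_mul_sub_mul_of_dvd_mul_add (hdvd i (mem_range.1 hi) p hpi) hpj)
      have := Nat.le_of_dvd (Int.natAbs_pos.2 hne) (by simpa using this)
      have := hP i p hpi
      omega
  · exact mem_union_right _ (Nat.mem_primesBelow.2 ⟨mem_range.1 hpG, hpp⟩)

lemma totient_succ_lt_of_prime_blocks {k G n j : ℕ} {a : ℕ → ℕ} {b : ℕ → ℤ} {P : ℕ → Finset ℕ}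
    {T : ℝ} (ha : ∀ i, i < k → 0 < a i)
    (hab : ∀ i j, i < j → j < k → (a i : ℤ) * b j ≠ (a j : ℤ) * b i)
    (hG : ∀ i < k, ∀ j < k, a j + (b j).natAbs + ((a i : ℤ) * b j - a j * b i).natAbs ≤ G)
    (hP : ∀ i, ∀ p ∈ P i, p.Prime ∧ G < p)
    (hPδ : ∏ p ∈ P (j + 1), (1 - (p : ℝ)⁻¹) < (∏ p ∈ (G + 1).primesBelow, (1 - (p : ℝ)⁻¹)) *
      exp (-2 * T) / (4 * (G + 1)) * ∏ p ∈ P j, (1 - (p : ℝ)⁻¹))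
    (hdvd : ∀ i < k, ∀ p ∈ P i, (p : ℤ) ∣ a i * n + b i) (hn : 2 * G + 1 ≤ n)
    (hX : sumInvPrimeFactorsOutside ((range k).biUnion P ∪ range (G + 1))
      ((a j : ℤ) * n + b j).toNat ≤ T) (hj : j + 1 < k) :
    ((a (j + 1) : ℤ) * n + b (j + 1)).toNat.totient < ((a j : ℤ) * n + b j).toNat.totient := by
  have hGj := hG j (by omega) j (by omega)
  have hGj' := hG (j + 1) hj (j + 1) hj
  obtain ⟨hpos, hn₁⟩ := mul_add_pos_and_le_two_mul_toNat (β := b j) (ha j (by omega)) (by omega) hn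
  obtain ⟨hpos', -⟩ :=
    mul_add_pos_and_le_two_mul_toNat (β := b (j + 1)) (ha (j + 1) hj) (by omega) hn
  have hm' := toNat_mul_add_le (n := n) (by omega : a (j + 1) ≤ G)
    (by omega : (b (j + 1)).natAbs ≤ G)
  refine totient_lt_totient_of_prime_blocks (Int.lt_toNat.2 hpos') (c := 4 * (G + 1))
    (by positivity) ?_
    (fun p hp => Int.mem_primeFactors_toNat.2 ⟨(hP _ p hp).1, hdvd _ hj p hp, hpos'⟩)
    (primeFactors_inter_subset_block (fun i p hp => (hP i p hp).2) (fun i hi hij => ?_) hdvd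
      (by omega)) (disjoint_left.2 fun p hp hpL => ?_) (fun p hp => (hP j p hp).1) hPδ hX
  · have hm : 1 ≤ ((a j : ℤ) * n + b j).toNat := Int.lt_toNat.2 hpos
    have : ((a (j + 1) : ℤ) * n + b (j + 1)).toNat ≤ 4 * (G + 1) * ((a j : ℤ) * n + b j).toNat :=
      calc _ ≤ G * (n + 1) := hm'
        _ ≤ G * (2 * ((a j : ℤ) * n + b j).toNat + 1) := by gcongr
        _ ≤ _ := by nlinarith
    exact_mod_cast this
  · have := hG i hi j (by omega)
    refine ⟨sub_ne_zero.2 fun h => ?_, by omega⟩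
    rcases lt_or_gt_of_ne hij with hlt | hgt
    · exact hab i j hlt (by omega) h
    · exact hab j i hgt hi h.symm
  · have := (Nat.mem_primesBelow.1 hpL).1
    have := (hP j p hp).2
    omega

lemma exists_progression_totient_decreasing {k G : ℕ} {a : ℕ → ℕ} {b : ℕ → ℤ}
    (ha : ∀ i, i < k → 0 < a i)
    (hab : ∀ i j, i < j → j < k → (a i : ℤ) * b j ≠ (a j : ℤ) * b i)
    (hG : ∀ i < k, ∀ j < k, a j + (b j).natAbs + ((a i : ℤ) * b j - a j * b i).natAbs ≤ G)
    (T : ℝ) :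
    ∃ M r n₀ : ℕ, ∃ E : Finset ℕ, 0 < M ∧ 0 < n₀ ∧
      (∀ q, q.Prime → q ∉ E → q.Coprime M ∧ ∀ j < k, ¬ q ∣ a j) ∧
      ∀ n, n₀ ≤ n → n ≡ r [MOD M] →
        (∀ j < k, sumInvPrimeFactorsOutside E ((a j : ℤ) * n + b j).toNat ≤ T) →
        (∀ j < k, 0 < (a j : ℤ) * n + b j) ∧ ∀ j, j + 1 < k →
          ((a (j + 1) : ℤ) * n + b (j + 1)).toNat.totient <
            ((a j : ℤ) * n + b j).toNat.totient := by
  have hL₀ := prod_one_sub_inv_pos fun p (hp : p ∈ (G + 1).primesBelow) =>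
    (Nat.mem_primesBelow.1 hp).2
  obtain ⟨P, hPp, hPd, hPδ⟩ := exists_prime_blocks G k
    (div_pos (mul_pos hL₀ (exp_pos (-2 * T))) (by positivity : (0 : ℝ) < 4 * (G + 1)))
  have hPa : ∀ j < k, ∀ p ∈ P j, ¬ p ∣ a j := fun j hj p hp hdvd => by
    have := Nat.le_of_dvd (ha j hj) hdvd
    have := hG j hj j hj
    have := (hPp j p hp).2
    omega
  obtain ⟨r, hr⟩ := exists_modEq_prod_forall_dvd b (fun j p hp => (hPp j p hp).1) hPd hPa
  refine ⟨∏ j ∈ range k, ∏ p ∈ P j, p, r, 2 * G + 1, (range k).biUnion P ∪ range (G + 1),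
    prod_pos fun j _ => prod_pos fun p hp => (hPp j p hp).1.pos, by omega,
    fun q hq hqE => ⟨?_, fun j hj hqa => ?_⟩, fun n hn hnr hX => ⟨fun j hj => ?_, fun j hj =>
      totient_succ_lt_of_prime_blocks ha hab hG hPp (hPδ j hj) (hr n hnr) hn (hX j (by omega)) hj⟩⟩
  · refine Nat.Coprime.prod_right fun j hj => Nat.Coprime.prod_right fun p hp =>
      (Nat.coprime_primes hq (hPp j p hp).1).2 fun hqp => hqE ?_
    exact mem_union_left _ (mem_biUnion.2 ⟨j, hj, hqp ▸ hp⟩)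
  · have := Nat.le_of_dvd (ha j hj) hqa
    have := hG j hj j hj
    exact hqE (mem_union_right _ (mem_range.2 (by omega)))
  · exact (mul_add_pos_and_le_two_mul_toNat (β := b j) (ha j hj)
      (by have := hG j hj j hj; omega) hn).1

lemma sub_le_card_filter_forall_le {k M x N r n₀ : ℕ} {a : ℕ → ℕ} {b : ℕ → ℤ} {E : Finset ℕ}
    {T : ℝ} (hT : 0 < T) (hM : 0 < M)
    (hE : ∀ q, q.Prime → q ∉ E → q.Coprime M ∧ ∀ j < k, ¬ q ∣ a j)
    (hN : ∀ j < k, ∀ n ≤ x, ((a j : ℤ) * n + b j).toNat ≤ N) :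
    x / M - 1 - n₀ - k * ((x / M + 2 * √N) / T) ≤ (#{n ∈ range (x + 1) | n₀ ≤ n ∧ n ≡ r [MOD M] ∧
      ∀ j < k, sumInvPrimeFactorsOutside E ((a j : ℤ) * n + b j).toNat ≤ T} : ℝ) := by
  set X := fun (j n : ℕ) => sumInvPrimeFactorsOutside E ((a j : ℤ) * n + b j).toNat
  have hcover : {n ∈ range (x + 1) | n ≡ r [MOD M]} ⊆
      {n ∈ range (x + 1) | n₀ ≤ n ∧ n ≡ r [MOD M] ∧ ∀ j < k, X j n ≤ T} ∪
        (range n₀ ∪ {n ∈ range (x + 1) | n ≡ r [MOD M] ∧ ∃ j < k, T < X j n}) := by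
    intro n hn
    simp only [mem_filter, mem_union, mem_range] at hn ⊢
    by_cases h : ∀ j < k, X j n ≤ T
    · by_cases hn₀ : n₀ ≤ n
      · exact Or.inl ⟨hn.1, hn₀, hn.2, h⟩
      · exact Or.inr (Or.inl (by omega))
    · push Not at h
      exact Or.inr (Or.inr ⟨hn.1, hn.2, h⟩)
  have hcard := (card_le_card hcover).trans
    ((card_union_le _ _).trans (Nat.add_le_add_left (card_union_le _ _) _))
  rw [card_range] at hcard
  have hcardR : (#{n ∈ range (x + 1) | n ≡ r [MOD M]} : ℝ) ≤
      #{n ∈ range (x + 1) | n₀ ≤ n ∧ n ≡ r [MOD M] ∧ ∀ j < k, X j n ≤ T} +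
        (n₀ + #{n ∈ range (x + 1) | n ≡ r [MOD M] ∧ ∃ j < k, T < X j n}) := by
    exact_mod_cast hcard
  linarith [div_sub_one_lt_card_filter_modEq x r hM, card_filter_exists_lt_le (r := r) hT hE hN]

lemma eventually_div_le_card_filter {k M r n₀ G : ℕ} {a : ℕ → ℕ} {b : ℕ → ℤ} {E : Finset ℕ}
    (hM : 0 < M) (hE : ∀ q, q.Prime → q ∉ E → q.Coprime M ∧ ∀ j < k, ¬ q ∣ a j)
    (hG : ∀ j < k, a j ≤ G ∧ (b j).natAbs ≤ G) :
    ∀ᶠ x : ℕ in Filter.atTop, (x : ℝ) / (2 * M) ≤ #{n ∈ range (x + 1) | n₀ ≤ n ∧ n ≡ r [MOD M] ∧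
      ∀ j < k, sumInvPrimeFactorsOutside E ((a j : ℤ) * n + b j).toNat ≤ 4 * (k + 1)} := by
  -- beyond this point `√(G (x + 1)) ≤ x / (4M)` and `n₀ + 1 ≤ x / (8M)`
  filter_upwards [Filter.eventually_ge_atTop (32 * M ^ 2 * G + 8 * M * (n₀ + 1) + 1)] with x hx
  have hcount := sub_le_card_filter_forall_le (x := x) (r := r) (n₀ := n₀)
    (T := 4 * (k + 1)) (by positivity) hM hE fun j hj n hn =>
      (toNat_mul_add_le (hG j hj).1 (hG j hj).2).trans (Nat.mul_le_mul_left G (Nat.succ_le_succ hn))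
  set Y := (x : ℝ) / M
  set s := √((G * (x + 1) : ℕ) : ℝ)
  have hxR : (32 * M ^ 2 * G + 8 * M * (n₀ + 1) + 1 : ℝ) ≤ x := by exact_mod_cast hx
  have hM₀ : (0 : ℝ) < M := by exact_mod_cast hM
  have hxY : (x : ℝ) = Y * M := (div_mul_cancel₀ _ hM₀.ne').symm
  have hY₁ : 32 * M * G ≤ Y := by
    rw [le_div_iff₀ hM₀]; nlinarith [Nat.cast_nonneg (α := ℝ) n₀, Nat.cast_nonneg (α := ℝ) G]
  have hY₂ : 8 * ((n₀ : ℝ) + 1) ≤ Y := by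
    rw [le_div_iff₀ hM₀]; nlinarith [Nat.cast_nonneg (α := ℝ) n₀, Nat.cast_nonneg (α := ℝ) G]
  have hs : s ≤ Y / 4 := by
    rw [sqrt_le_left (by positivity)]
    push_cast
    rw [hxY]
    nlinarith [Nat.cast_nonneg (α := ℝ) G,
      mul_le_mul_of_nonneg_left hY₁ (Nat.cast_nonneg (α := ℝ) G)]
  have hk : (k : ℝ) * ((Y + 2 * s) / (4 * (k + 1))) ≤ (Y + 2 * s) / 4 := by
    rw [mul_div_assoc', div_le_div_iff₀ (by positivity) (by positivity)]
    nlinarith [sqrt_nonneg ((G * (x + 1) : ℕ) : ℝ), div_nonneg x.cast_nonneg hM₀.le]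
  rw [show (x : ℝ) / (2 * M) = Y / 2 by ring]
  linarith

lemma lowerDensity_pos_of_eventually {S : Set ℕ} {c : ℝ} (hc : 0 < c)
    (h : ∀ᶠ x : ℕ in Filter.atTop, ∃ A : Finset ℕ, (∀ n ∈ A, n ∈ Icc 1 x ∧ n ∈ S) ∧ c * x ≤ #A) :
    0 < lowerDensity S := by
  classical
  refine hc.trans_le (Filter.le_liminf_of_le (Filter.isCoboundedUnder_ge_of_le _ (x := 1)
    fun x => div_le_one_of_le₀ ?_ x.cast_nonneg) ?_)
  · exact_mod_cast (card_filter_le _ _).trans (Nat.card_Icc 1 x).le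
  · filter_upwards [h, Filter.eventually_gt_atTop 0] with x ⟨A, hA, hcard⟩ hx
    rw [le_div_iff₀ (by exact_mod_cast hx)]
    exact hcard.trans (by exact_mod_cast card_le_card fun n hn => mem_filter.2 (hA n hn))

theorem decreasing_totient_values_general
    (k : ℕ) (a : ℕ → ℕ) (b : ℕ → ℤ)
    (ha : ∀ i, i < k → 0 < a i)
    (hab : ∀ i j, i < j → j < k → (a i : ℤ) * b j ≠ (a j : ℤ) * b i) :
    0 < lowerDensity {n : ℕ | 0 < n ∧
      (∀ j, j < k → 0 < (a j : ℤ) * (n : ℤ) + b j) ∧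
      (∀ j, j + 1 < k →
        ((a j : ℤ) * (n : ℤ) + b j).toNat.totient >
          ((a (j+1) : ℤ) * (n : ℤ) + b (j+1)).toNat.totient)} := by
  obtain ⟨G, hG⟩ := exists_coeff_bound k a b
  obtain ⟨M, r, n₀, E, hM, hn₀, hE, hgood⟩ :=
    exists_progression_totient_decreasing ha hab hG (4 * (k + 1))
  refine lowerDensity_pos_of_eventually (c := 1 / (2 * M)) (by positivity) ?_
  filter_upwards [eventually_div_le_card_filter (b := b) (G := G) (r := r) (n₀ := n₀) hM hE
    fun j hj => by have := hG j hj j hj; omega] with x hx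
  refine ⟨_, fun n hn => ?_, by rwa [one_div_mul_eq_div]⟩
  obtain ⟨hnx, hnn₀, hnr, hX⟩ := by simpa only [mem_filter, mem_range] using hn
  exact ⟨mem_Icc.2 ⟨by omega, by omega⟩, by omega, hgood n hnn₀ hnr hX⟩

theorem decreasing_totient_values
    (k : ℕ) (hk : 2 ≤ k) (a : ℕ → ℕ) (b : ℕ → ℤ)
    (ha : ∀ i, i < k → 0 < a i)
    (hab : ∀ i j, i < j → j < k → (a i : ℤ) * b j ≠ (a j : ℤ) * b i) :
    0 < lowerDensity {n : ℕ | 0 < n ∧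
      (∀ j, j < k → 0 < (a j : ℤ) * (n : ℤ) + b j) ∧
      (∀ j, j + 1 < k →
        ((a j : ℤ) * (n : ℤ) + b j).toNat.totient >
          ((a (j+1) : ℤ) * (n : ℤ) + b (j+1)).toNat.totient)} :=
  decreasing_totient_values_general k a b ha hab
end

section
/- Let k ≥ 1 and let a₁, …, a_k, b₁, …, b_k be positive integers with a_i·b_j ≠ a_j·b_i for all 1 ≤ i < j ≤ k. Let A be a nonzero integer that is a multiple of each b_j (1 ≤ j ≤ k) and a multiple of each a_i·b_j − a_j·b_i (1 ≤ i < j ≤ k). Let Q₁, …, Q_k be pairwise relatively prime positive integers, each of which is also relatively prime to A. Let r be an integer such that Q_j divides a_j·A·r + b_j for each 1 ≤ j ≤ k. Then for each 1 ≤ j ≤ k, the greatest common divisor of a_j·A·Q₁·Q₂⋯Q_k and a_j·A·r + b_j is exactly Q_j·b_j. -/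
/-!
Write `N = a_j A r + b_j`. Since `b_j ∣ a_j A`, the gcd of `a_j A` and `N` is `b_j`. For `i ≠ j`,
a common divisor `d` of `Q_i` and `N` also divides `a_i A r + b_i`, hence
`b_i N - b_j (a_i A r + b_i) = A r (a_j b_i - a_i b_j)`; as `d` is prime to `A` and to its divisor
`a_j b_i - a_i b_j`, it divides `r`, then `b_j`, then `A`, so it is a unit. Thus the gcd of `∏ Q_i`
and `N` is `Q_j`, and since `b_j` and `Q_j` are coprime the two gcds multiply.
-/

theorem isCoprime_mul_add_of_dvd_sub {R : Type*} [CommRing R] [IsBezout R] {q A a b a' b' r : R}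
    (hqA : IsCoprime q A) (hb' : b' ∣ A) (hD : a * b' - a' * b ∣ A) (hq : q ∣ a * A * r + b) :
    IsCoprime q (a' * A * r + b') := by
  refine isRelPrime_iff_isCoprime.mp fun d hdq hdN => ?_
  have hdA : IsCoprime d A := hqA.of_isCoprime_of_dvd_left hdq
  have hdAr : d ∣ A * (r * (a * b' - a' * b)) := by
    have h : A * (r * (a * b' - a' * b)) = b' * (a * A * r + b) - b * (a' * A * r + b') := by ring
    rw [h]
    exact dvd_sub ((hdq.trans hq).mul_left _) (hdN.mul_left _)
  have hdr : d ∣ r :=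
    (hdA.of_isCoprime_of_dvd_right hD).dvd_of_dvd_mul_right (hdA.dvd_of_dvd_mul_left hdAr)
  have hdb' : d ∣ b' := (dvd_add_right (hdr.mul_left _)).mp hdN
  exact hdA.isUnit_of_dvd' dvd_rfl (hdb'.trans hb')

theorem Int.gcd_mul_left_eq_mul_gcd {m n k : ℤ} (h : IsCoprime (m.gcd k : ℤ) (n.gcd k)) :
    ((m * n).gcd k : ℤ) = m.gcd k * n.gcd k := by
  apply Int.dvd_antisymm (Int.natCast_nonneg _) (by positivity)
  · exact_mod_cast Int.gcd_mul_left_dvd_mul_gcd k m n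
  · exact Int.dvd_coe_gcd (mul_dvd_mul (Int.gcd_dvd_left _ _) (Int.gcd_dvd_left _ _))
      (h.mul_dvd (Int.gcd_dvd_right _ _) (Int.gcd_dvd_right _ _))

theorem gcd_lemma_general
    (k : ℕ) (a b : ℕ → ℤ)
    (hb : ∀ i, i < k → 0 < b i)
    (A : ℤ)
    (hAb : ∀ j, j < k → b j ∣ A)
    (hAab : ∀ i j, i < j → j < k → (a i * b j - a j * b i) ∣ A)
    (Q : ℕ → ℤ) (hQpos : ∀ j, j < k → 0 < Q j)
    (hQA : ∀ j, j < k → IsCoprime (Q j) A)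
    (r : ℤ) (hr : ∀ j, j < k → Q j ∣ (a j * A * r + b j)) :
    ∀ j, j < k →
      (Int.gcd (a j * A * ∏ i ∈ Finset.range k, Q i) (a j * A * r + b j) : ℤ) =
        Q j * b j := by
  intro j hj
  have hgcd_aA : (Int.gcd (a j * A) (a j * A * r + b j) : ℤ) = b j := by
    rw [Int.gcd_mul_left_add_right, Int.gcd_eq_right (hb j hj).le ((hAb j hj).mul_left _)]
  have hD : ∀ i, i < k → i ≠ j → a i * b j - a j * b i ∣ A := by
    intro i hi hij
    rcases lt_or_gt_of_ne hij with h | h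
    · exact hAab i j h hj
    · simpa only [neg_sub] using (hAab j i h hi).neg_left
  have hPN : Int.gcd (∏ i ∈ (Finset.range k).erase j, Q i) (a j * A * r + b j) = 1 := by
    refine Int.isCoprime_iff_gcd_eq_one.mp (IsCoprime.prod_left fun i hi => ?_)
    have hi' := Finset.mem_range.mp (Finset.mem_of_mem_erase hi)
    exact isCoprime_mul_add_of_dvd_sub (hQA i hi') (hAb j hj)
      (hD i hi' (Finset.ne_of_mem_erase hi)) (hr i hi')
  have hgcd_Q : (Int.gcd (∏ i ∈ Finset.range k, Q i) (a j * A * r + b j) : ℤ) = Q j := by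
    rw [← Finset.mul_prod_erase _ _ (Finset.mem_range.mpr hj),
      Int.gcd_mul_left_eq_mul_gcd (by rw [hPN, Nat.cast_one]; exact isCoprime_one_right), hPN,
      Int.gcd_eq_left (hQpos j hj).le (hr j hj), Nat.cast_one, mul_one]
  have hbQ : IsCoprime (b j) (Q j) := ((hQA j hj).of_isCoprime_of_dvd_right (hAb j hj)).symm
  rw [Int.gcd_mul_left_eq_mul_gcd (by rwa [hgcd_aA, hgcd_Q]), hgcd_aA, hgcd_Q, mul_comm]

theorem gcd_lemma
    (k : ℕ) (hk : 1 ≤ k) (a b : ℕ → ℤ)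
    (ha : ∀ i, i < k → 0 < a i) (hb : ∀ i, i < k → 0 < b i)
    (hab : ∀ i j, i < j → j < k → a i * b j ≠ a j * b i)
    (A : ℤ) (hA : A ≠ 0)
    (hAb : ∀ j, j < k → b j ∣ A)
    (hAab : ∀ i j, i < j → j < k → (a i * b j - a j * b i) ∣ A)
    (Q : ℕ → ℤ) (hQpos : ∀ j, j < k → 0 < Q j)
    (hQcop : ∀ i j, i < k → j < k → i ≠ j → IsCoprime (Q i) (Q j))
    (hQA : ∀ j, j < k → IsCoprime (Q j) A)
    (r : ℤ) (hr : ∀ j, j < k → Q j ∣ (a j * A * r + b j)) :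
    ∀ j, j < k →
      (Int.gcd (a j * A * ∏ i ∈ Finset.range k, Q i) (a j * A * r + b j) : ℤ) =
        Q j * b j :=
  gcd_lemma_general k a b hb A hAb hAab Q hQpos hQA r hr
end

section
/- Let k be a positive integer, let c₁, …, c_k, d₁, …, d_k be positive integers with c_j and d_j relatively prime for each 1 ≤ j ≤ k, and set M = 2·max{c₁, …, c_k, d₁, …, d_k}. Then for every real x ≥ 1, ∑_{m ≤ x} ∑_{j=1}^{k} ∑_{p ∣ (c_jm+d_j)} log(1 − 1/p)^{-1} ≤ (k log 2)·x + (k log 4)·log(xM), where the outer sum is over positive integers m ≤ x and the inner sum is over the primes p dividing c_jm + d_j. -/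
/-!
For a fixed progression `c m + d` with `c, d` coprime, a prime `p` divides `c m + d` for
`m` in a single residue class mod `p`, hence for at most `n / p + 1` of the `m ≤ n`. Swapping
the sums, the contribution of one progression is at most
`n · ∑_p log (1 - 1/p)⁻¹ / p + ∑_{p ≤ c n + d} log (1 - 1/p)⁻¹`.
The second sum telescopes against `log p - log (p - 1)` to at most `log (c n + d) ≤ log (x M)`;
the first is at most `log 2`, by computing the primes below `11` and bounding the rest by the
telescoping series `∑ (1/(p-1) - 1/p)`.
-/

open Finset Real

theorem Finset.sum_sub_pred_le {f : ℕ → ℝ} {s : Finset ℕ} {a b : ℕ} (hab : a ≤ b)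
    (hs : s ⊆ Ioc a b) (hf : ∀ i ∈ Ioc a b, f (i - 1) ≤ f i) :
    ∑ i ∈ s, (f i - f (i - 1)) ≤ f b - f a :=
  calc ∑ i ∈ s, (f i - f (i - 1))
      ≤ ∑ i ∈ Ioc a b, (f i - f (i - 1)) :=
        sum_le_sum_of_subset_of_nonneg hs fun i hi _ ↦ sub_nonneg.2 (hf i hi)
    _ = f b - f a := by
        rw [← Ico_add_one_add_one_eq_Ioc]
        simpa using sum_Ico_sub (fun i ↦ f (i - 1)) (Nat.add_le_add_right hab 1)

theorem sum_one_div_sub_one_sub_one_div_le {s : Finset ℕ} {a : ℕ} (ha : 0 < a)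
    (hs : ∀ i ∈ s, a < i) : ∑ i ∈ s, (1 / ((i : ℝ) - 1) - 1 / i) ≤ 1 / a := by
  set b := max a (s.sup id)
  have hsub : s ⊆ Ioc a b := fun i hi ↦
    mem_Ioc.2 ⟨hs i hi, le_max_of_le_right (le_sup (f := id) hi)⟩
  have hterm : ∀ i ∈ Ioc a b, 1 / ((i : ℝ) - 1) - 1 / i = -(1 / i) - -(1 / ((i - 1 : ℕ) : ℝ)) := by
    intro i hi
    rw [Nat.cast_pred (by grind)]
    ring
  rw [sum_congr rfl fun i hi ↦ hterm i (hsub hi)]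
  refine (sum_sub_pred_le (f := fun i ↦ -(1 / (i : ℝ))) (le_max_left _ _) hsub ?_).trans ?_
  · intro i hi
    have : 1 ≤ i - 1 := by grind
    simp only [neg_le_neg_iff]
    gcongr
    exact Nat.sub_le i 1
  · have : 0 ≤ 1 / (b : ℝ) := by positivity
    linarith

section EulerFactor

variable {t : ℝ}

theorem log_inv_one_sub_one_div_nonneg (ht : 1 ≤ t) : 0 ≤ log (1 - 1 / t)⁻¹ := by
  rw [log_inv, neg_nonneg]
  refine log_nonpos (sub_nonneg.2 ?_) (sub_le_self _ (by positivity))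
  rw [div_le_one (by positivity)]
  exact ht

theorem log_inv_one_sub_one_div_eq (ht : 1 < t) :
    log (1 - 1 / t)⁻¹ = log t - log (t - 1) := by
  rw [← log_div (by positivity) (by linarith)]
  congr 1
  field_simp

theorem log_inv_one_sub_one_div_div_le (ht : 1 < t) :
    log (1 - 1 / t)⁻¹ / t ≤ 1 / (t - 1) - 1 / t := by
  have h₁ : 0 < t - 1 := by linarith
  have hlog : log (1 - 1 / t)⁻¹ ≤ 1 / (t - 1) := by
    rw [log_inv_one_sub_one_div_eq ht, ← log_div (by positivity) h₁.ne']
    refine (log_le_sub_one_of_pos (by positivity)).trans_eq ?_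
    field_simp
    ring
  calc log (1 - 1 / t)⁻¹ / t ≤ 1 / (t - 1) / t := by gcongr
    _ = 1 / (t - 1) - 1 / t := by field_simp; ring

end EulerFactor

theorem sum_primesLE_log_inv_one_sub_one_div_le (N : ℕ) :
    ∑ p ∈ Nat.primesLE N, log (1 - 1 / (p : ℝ))⁻¹ ≤ log N := by
  have hterm : ∀ p ∈ Nat.primesLE N,
      log (1 - 1 / (p : ℝ))⁻¹ = log (p : ℝ) - log ((p - 1 : ℕ) : ℝ) := fun p hp ↦ by
    rw [Nat.cast_pred (Nat.prime_of_mem_primesLE hp).pos,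
      log_inv_one_sub_one_div_eq (by exact_mod_cast Nat.one_lt_of_mem_primesLE hp)]
  rw [sum_congr rfl hterm]
  refine (sum_sub_pred_le (f := fun i ↦ log (i : ℝ)) (Nat.zero_le N) ?_ ?_).trans_eq (by simp)
  · rw [Nat.primesLE_eq_filter_Ioc_zero]
    exact filter_subset _ _
  · intro i hi
    rcases Nat.eq_zero_or_pos (i - 1) with h | h
    · simp [h, log_natCast_nonneg]
    · exact log_le_log (by exact_mod_cast h) (by exact_mod_cast Nat.sub_le i 1)

theorem sum_log_inv_one_sub_one_div_div_le_log_two {s : Finset ℕ} (hs : ∀ p ∈ s, p.Prime) :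
    ∑ p ∈ s, log (1 - 1 / (p : ℝ))⁻¹ / p ≤ log 2 := by
  have hnonneg : ∀ p : ℕ, 0 ≤ log (1 - 1 / (p : ℝ))⁻¹ / p := fun p ↦ by
    rcases p.eq_zero_or_pos with rfl | hp
    · simp
    · exact div_nonneg (log_inv_one_sub_one_div_nonneg (by exact_mod_cast hp)) p.cast_nonneg
  -- `1/6 + 1/20 + 1/42 + 1/10 < (log 2) / 2`; a smaller cutoff than `11` leaves a tail too large.
  have hsmall : ∑ p ∈ s with p < 11, log (1 - 1 / (p : ℝ))⁻¹ / p
      ≤ log 2 / 2 + (1 / 2 - 1 / 3) + (1 / 4 - 1 / 5) + (1 / 6 - 1 / 7) := by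
    have hsub : {p ∈ s | p < 11} ⊆ {2, 3, 5, 7} := fun p hp ↦ by
      rw [mem_filter] at hp
      exact (by decide : ∀ p < 11, p.Prime → p ∈ ({2, 3, 5, 7} : Finset ℕ)) p hp.2 (hs p hp.1)
    refine (sum_le_sum_of_subset_of_nonneg hsub fun p _ _ ↦ hnonneg p).trans ?_
    have h3 := log_inv_one_sub_one_div_div_le (t := 3) (by norm_num)
    have h5 := log_inv_one_sub_one_div_div_le (t := 5) (by norm_num)
    have h7 := log_inv_one_sub_one_div_div_le (t := 7) (by norm_num)
    have h2 : log (1 - 1 / (2 : ℝ))⁻¹ = log 2 := by norm_num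
    rw [sum_insert (by decide), sum_insert (by decide), sum_insert (by decide), sum_singleton]
    push_cast
    linarith
  have hlarge : ∑ p ∈ s with ¬p < 11, log (1 - 1 / (p : ℝ))⁻¹ / p ≤ 1 / 10 := by
    calc ∑ p ∈ s with ¬p < 11, log (1 - 1 / (p : ℝ))⁻¹ / p
        ≤ ∑ p ∈ s with ¬p < 11, (1 / ((p : ℝ) - 1) - 1 / p) := by
          refine sum_le_sum fun p hp ↦ log_inv_one_sub_one_div_div_le ?_
          exact_mod_cast (hs p (mem_filter.1 hp).1).one_lt
      _ ≤ 1 / (10 : ℕ) := sum_one_div_sub_one_sub_one_div_le (by norm_num) fun p hp ↦ by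
          grind
      _ = 1 / 10 := by norm_num
  rw [← sum_filter_add_sum_filter_not s (· < 11)]
  linarith [log_two_gt_d9]

theorem Nat.card_le_div_add_one_of_modEq {s : Finset ℕ} {n p : ℕ} (hs : ∀ m ∈ s, m ≤ n)
    (hmod : ∀ m₁ ∈ s, ∀ m₂ ∈ s, m₁ ≡ m₂ [MOD p]) : #s ≤ n / p + 1 := by
  have := card_le_card_of_injOn (t := range (n / p + 1)) (· / p)
    (fun m hm ↦ by simpa [Nat.lt_succ_iff] using Nat.div_le_div_right (hs m hm))
    (fun m₁ hm₁ m₂ hm₂ hdiv ↦ by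
      rw [← Nat.div_add_mod m₁ p, ← Nat.div_add_mod m₂ p, hmod m₁ hm₁ m₂ hm₂]
      simp_all)
  simpa using this

theorem Nat.modEq_of_prime_dvd_mul_add {p c d m₁ m₂ : ℕ} (hp : p.Prime) (hcd : c.Coprime d)
    (h₁ : p ∣ c * m₁ + d) (h₂ : p ∣ c * m₂ + d) : m₁ ≡ m₂ [MOD p] := by
  have := Fact.mk hp
  have hc : (c : ZMod p) ≠ 0 := by
    rw [Ne, ZMod.natCast_eq_zero_iff]
    intro hpc
    exact hp.ne_one <|
      Nat.eq_one_of_dvd_coprimes hcd hpc ((Nat.dvd_add_right (hpc.mul_right m₁)).1 h₁)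
  rw [← ZMod.natCast_eq_zero_iff] at h₁ h₂
  rw [← ZMod.natCast_eq_natCast_iff]
  push_cast at h₁ h₂
  exact mul_left_cancel₀ hc (add_right_cancel (h₁.trans h₂.symm))

theorem Nat.Coprime.mul_add_ne_zero {c d m : ℕ} (hcd : c.Coprime d) (hm : m ≠ 0) :
    c * m + d ≠ 0 := by
  intro h
  obtain ⟨rfl, rfl⟩ : c = 0 ∧ d = 0 := by simp_all
  simp at hcd

theorem sum_sum_primeFactors_mul_add_le {c d : ℕ} (hcd : c.Coprime d) (n : ℕ) :
    ∑ m ∈ Icc 1 n, ∑ p ∈ (c * m + d).primeFactors, log (1 - 1 / (p : ℝ))⁻¹ ≤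
      log 2 * n + log (c * n + d : ℕ) := by
  set N := c * n + d
  have hswap : ∀ m p, m ∈ Icc 1 n ∧ p ∈ (c * m + d).primeFactors ↔
      m ∈ {m ∈ Icc 1 n | p ∣ c * m + d} ∧ p ∈ Nat.primesLE N := fun m p ↦ by
    simp only [mem_Icc, Nat.mem_primeFactors, mem_filter, Nat.mem_primesLE]
    constructor
    · rintro ⟨hm, hp, hdvd, hne⟩
      have hle : c * m + d ≤ N := Nat.add_le_add_right (Nat.mul_le_mul_left c hm.2) d
      exact ⟨⟨hm, hdvd⟩, (Nat.le_of_dvd (Nat.pos_of_ne_zero hne) hdvd).trans hle, hp⟩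
    · rintro ⟨⟨hm, hdvd⟩, -, hp⟩
      exact ⟨hm, hp, hdvd, hcd.mul_add_ne_zero (by omega)⟩
  have hcount : ∀ p ∈ Nat.primesLE N, (#{m ∈ Icc 1 n | p ∣ c * m + d} : ℝ) ≤ n / p + 1 :=
    fun p hp ↦ by
      have := Nat.card_le_div_add_one_of_modEq (s := {m ∈ Icc 1 n | p ∣ c * m + d}) (p := p)
        (fun m hm ↦ (mem_Icc.1 (mem_filter.1 hm).1).2)
        (fun m₁ hm₁ m₂ hm₂ ↦ Nat.modEq_of_prime_dvd_mul_add (Nat.prime_of_mem_primesLE hp) hcd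
          (mem_filter.1 hm₁).2 (mem_filter.1 hm₂).2)
      calc (#{m ∈ Icc 1 n | p ∣ c * m + d} : ℝ) ≤ (n / p : ℕ) + 1 := by exact_mod_cast this
        _ ≤ n / p + 1 := by gcongr; exact Nat.cast_div_le
  calc ∑ m ∈ Icc 1 n, ∑ p ∈ (c * m + d).primeFactors, log (1 - 1 / (p : ℝ))⁻¹
      = ∑ p ∈ Nat.primesLE N, #{m ∈ Icc 1 n | p ∣ c * m + d} * log (1 - 1 / (p : ℝ))⁻¹ := by
        rw [sum_comm' hswap]
        simp only [sum_const, nsmul_eq_mul]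
    _ ≤ ∑ p ∈ Nat.primesLE N, (n / p + 1) * log (1 - 1 / (p : ℝ))⁻¹ := by
        refine sum_le_sum fun p hp ↦ mul_le_mul_of_nonneg_right (hcount p hp) ?_
        have hp1 : (1 : ℝ) ≤ p := by exact_mod_cast (Nat.prime_of_mem_primesLE hp).one_le
        exact log_inv_one_sub_one_div_nonneg hp1
    _ = n * ∑ p ∈ Nat.primesLE N, log (1 - 1 / (p : ℝ))⁻¹ / p
          + ∑ p ∈ Nat.primesLE N, log (1 - 1 / (p : ℝ))⁻¹ := by
        rw [mul_sum, ← sum_add_distrib]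
        refine sum_congr rfl fun p _ ↦ by ring
    _ ≤ n * log 2 + log N := by
        gcongr
        · exact sum_log_inv_one_sub_one_div_div_le_log_two fun p ↦ Nat.prime_of_mem_primesLE
        · exact sum_primesLE_log_inv_one_sub_one_div_le N
    _ = log 2 * n + log N := by ring

theorem cast_mul_add_le_mul {c d n M : ℕ} {x : ℝ} (hM : 2 * max c d ≤ M) (hn : (n : ℝ) ≤ x)
    (hx : 1 ≤ x) : ((c * n + d : ℕ) : ℝ) ≤ x * M := by
  have hcM : 2 * (c : ℝ) ≤ M := by
    exact_mod_cast (Nat.mul_le_mul_left 2 (le_max_left c d)).trans hM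
  have hdM : 2 * (d : ℝ) ≤ M := by
    exact_mod_cast (Nat.mul_le_mul_left 2 (le_max_right c d)).trans hM
  push_cast
  nlinarith [c.cast_nonneg (α := ℝ)]

theorem log_totient_ratio_sum_upper_bound_general
    (k : ℕ) (c d : ℕ → ℕ)
    (hcd : ∀ j, j < k → Nat.Coprime (c j) (d j))
    (M : ℕ) (hM : M = 2 * (Finset.range k).sup (fun j => max (c j) (d j)))
    (x : ℝ) (hx : 1 ≤ x) :
    ∑ m ∈ Finset.Icc 1 ⌊x⌋₊, ∑ j ∈ Finset.range k,
        ∑ p ∈ (c j * m + d j).primeFactors, Real.log (1 - 1 / (p : ℝ))⁻¹ ≤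
      (k : ℝ) * Real.log 2 * x + (k : ℝ) * Real.log 4 * Real.log (x * M) := by
  set n := ⌊x⌋₊
  have hnx : (n : ℝ) ≤ x := Nat.floor_le (by linarith)
  have hn : n ≠ 0 := (Nat.floor_pos.2 hx).ne'
  have hlog4 : 1 ≤ log 4 := by
    rw [le_log_iff_exp_le (by norm_num)]
    linarith [exp_one_lt_d9]
  have hbound : ∀ j ∈ range k, ∑ m ∈ Icc 1 n, ∑ p ∈ (c j * m + d j).primeFactors,
      log (1 - 1 / (p : ℝ))⁻¹ ≤ log 2 * x + log 4 * log (x * M) := fun j hj ↦ by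
    have hjM : 2 * max (c j) (d j) ≤ M :=
      hM ▸ Nat.mul_le_mul_left 2 (le_sup (f := fun j ↦ max (c j) (d j)) hj)
    have hpos : 0 < ((c j * n + d j : ℕ) : ℝ) := by
      exact_mod_cast Nat.pos_of_ne_zero ((hcd j (mem_range.1 hj)).mul_add_ne_zero hn)
    have hlog : log (c j * n + d j : ℕ) ≤ log (x * M) :=
      log_le_log hpos (cast_mul_add_le_mul hjM hnx hx)
    have hlog_nonneg : 0 ≤ log (c j * n + d j : ℕ) := log_natCast_nonneg _
    refine (sum_sum_primeFactors_mul_add_le (hcd j (mem_range.1 hj)) n).trans (add_le_add ?_ ?_)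
    · exact mul_le_mul_of_nonneg_left hnx (log_nonneg one_le_two)
    · exact hlog.trans (le_mul_of_one_le_left (hlog_nonneg.trans hlog) hlog4)
  rw [sum_comm]
  refine (sum_le_sum hbound).trans_eq ?_
  rw [sum_const, card_range, nsmul_eq_mul]
  ring

theorem log_totient_ratio_sum_upper_bound
    (k : ℕ) (hk : 0 < k) (c d : ℕ → ℕ)
    (hc : ∀ j, j < k → 0 < c j) (hd : ∀ j, j < k → 0 < d j)
    (hcd : ∀ j, j < k → Nat.Coprime (c j) (d j))
    (M : ℕ) (hM : M = 2 * (Finset.range k).sup (fun j => max (c j) (d j)))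
    (x : ℝ) (hx : 1 ≤ x) :
    ∑ m ∈ Finset.Icc 1 ⌊x⌋₊, ∑ j ∈ Finset.range k,
        ∑ p ∈ (c j * m + d j).primeFactors, Real.log (1 - 1 / (p : ℝ))⁻¹ ≤
      (k : ℝ) * Real.log 2 * x + (k : ℝ) * Real.log 4 * Real.log (x * M) :=
  log_totient_ratio_sum_upper_bound_general k c d hcd M hM x hx
end

section
/- Let 𝒜 be a finite set of primes and let t be a real number with 0 < t ≤ 1. Then there exists a finite set 𝒫 of primes, disjoint from 𝒜, such that t/2 < ∏_{p ∈ 𝒫} (1 − 1/p) ≤ t. -/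
open Nat Filter Set

private lemma factor_pos {p : ℕ} (hp : p.Prime) : (0:ℝ) < 1 - 1 / p := by
  have h2 : (2:ℝ) ≤ (p:ℝ) := by exact_mod_cast hp.two_le
  have : (1:ℝ)/p ≤ 1/2 := by
    apply div_le_div_of_nonneg_left (by norm_num) (by norm_num) h2
  linarith

private lemma prod_primes_nonneg (T : Finset ℕ) (hT : ∀ p ∈ T, p.Prime) :
    (0:ℝ) ≤ ∏ p ∈ T, (1 - 1 / (p : ℝ)) :=
  Finset.prod_nonneg fun p hp => (factor_pos (hT p hp)).le

private lemma tendsto_full_prod :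
    Tendsto (fun n : ℕ => ∏ p ∈ n.primesBelow, (1 - 1 / (p : ℝ))) atTop (nhds 0) := by
  have hsum : Tendsto (fun n : ℕ => ∑ p ∈ n.primesBelow, (1 / (p:ℝ))) atTop atTop := by
    have h := not_summable_one_div_on_primes
    have := (not_summable_iff_tendsto_nat_atTop_of_nonneg
      (f := indicator {p | p.Prime} (fun n : ℕ ↦ (1 : ℝ) / n))
      (fun n => indicator_nonneg (fun p _ => by positivity) n)).mp h
    convert this using 2 with n
    rw [Nat.primesBelow, Finset.sum_filter]
    apply Finset.sum_congr rfl
    intro i _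
    by_cases hi : i.Prime
    · simp [hi, indicator_of_mem, Set.mem_setOf_eq]
    · simp [hi, indicator_of_notMem, Set.mem_setOf_eq]
  have hexp : Tendsto (fun n : ℕ => Real.exp (-∑ p ∈ n.primesBelow, (1 / (p:ℝ)))) atTop (nhds 0) :=
    Real.tendsto_exp_atBot.comp (tendsto_neg_atBot_iff.mpr hsum)
  refine tendsto_of_tendsto_of_tendsto_of_le_of_le tendsto_const_nhds hexp ?_ ?_
  · intro n
    exact prod_primes_nonneg _ (fun p hp => Nat.prime_of_mem_primesBelow hp)
  · intro n
    simp only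
    rw [← Finset.sum_neg_distrib, Real.exp_sum]
    apply Finset.prod_le_prod
    · intro p hp; exact (factor_pos (Nat.prime_of_mem_primesBelow hp)).le
    · intro p hp
      have := Real.add_one_le_exp (-(1/(p:ℝ)))
      linarith

theorem exists_prime_set_with_product_in_interval
    (S : Finset ℕ) (hS : ∀ p ∈ S, p.Prime)
    (t : ℝ) (ht : 0 < t) (ht' : t ≤ 1) :
    ∃ P : Finset ℕ, (∀ p ∈ P, p.Prime) ∧ Disjoint P S ∧
      t / 2 < ∏ p ∈ P, (1 - 1 / (p : ℝ)) ∧ ∏ p ∈ P, (1 - 1 / (p : ℝ)) ≤ t := by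
  classical
  set g : ℕ → ℝ := fun n : ℕ => ∏ p ∈ n.primesBelow \ S, (1 - 1 / (p : ℝ)) with hg
  have hgdef : ∀ n : ℕ, g n = ∏ p ∈ n.primesBelow \ S, (1 - 1 / (p : ℝ)) := fun n => rfl
  have hgprime : ∀ n : ℕ, ∀ p ∈ n.primesBelow \ S, p.Prime := by
    intro n p hp
    exact Nat.prime_of_mem_primesBelow (Finset.mem_sdiff.mp hp).1
  have hc : (0:ℝ) < ∏ p ∈ S, (1 - 1 / (p : ℝ)) :=
    Finset.prod_pos fun p hp => factor_pos (hS p hp)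
  have hglim : Tendsto g atTop (nhds 0) := by
    have h0 : Tendsto (fun n : ℕ =>
        (∏ p ∈ n.primesBelow, (1 - 1 / (p : ℝ))) / ∏ p ∈ S, (1 - 1 / (p : ℝ)))
        atTop (nhds 0) := by
      simpa using tendsto_full_prod.div_const (∏ p ∈ S, (1 - 1 / (p : ℝ)))
    refine tendsto_of_tendsto_of_tendsto_of_le_of_le tendsto_const_nhds h0 ?_ ?_
    · intro n; exact prod_primes_nonneg _ (hgprime n)
    · intro n
      rw [hgdef, le_div_iff₀ hc]
      have hsplit : (∏ p ∈ n.primesBelow \ S, (1 - 1 / (p : ℝ))) *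
          ∏ p ∈ n.primesBelow ∩ S, (1 - 1 / (p : ℝ))
          = ∏ p ∈ n.primesBelow, (1 - 1 / (p : ℝ)) := by
        rw [← Finset.sdiff_inter_self_left]
        exact Finset.prod_sdiff Finset.inter_subset_left
      have hle : ∏ p ∈ S, (1 - 1 / (p : ℝ)) ≤ ∏ p ∈ n.primesBelow ∩ S, (1 - 1 / (p : ℝ)) := by
        have hps := Finset.prod_sdiff (f := fun p : ℕ => (1 - 1 / (p : ℝ)))
          (Finset.inter_subset_right (s₁ := n.primesBelow) (s₂ := S))
        have hone : ∏ p ∈ S \ (n.primesBelow ∩ S), (1 - 1 / (p : ℝ)) ≤ 1 := by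
          apply Finset.prod_le_one
          · intro p hp; exact (factor_pos (hS p (Finset.mem_sdiff.mp hp).1)).le
          · intro p hp
            have h2 : (0:ℝ) < (p:ℝ) := by
              exact_mod_cast (hS p (Finset.mem_sdiff.mp hp).1).pos
            have : (0:ℝ) < 1/(p:ℝ) := by positivity
            linarith
        have hT0 : (0:ℝ) ≤ ∏ p ∈ n.primesBelow ∩ S, (1 - 1 / (p : ℝ)) :=
          Finset.prod_nonneg fun p hp => (factor_pos (hS p (Finset.mem_inter.mp hp).2)).le
        nlinarith [hps]
      have hgn : (0:ℝ) ≤ ∏ p ∈ n.primesBelow \ S, (1 - 1 / (p : ℝ)) :=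
        prod_primes_nonneg _ (hgprime n)
      nlinarith [mul_le_mul_of_nonneg_left hle hgn]
  have hex : ∃ n, g n ≤ t := by
    obtain ⟨n, hn⟩ := (hglim.eventually (gt_mem_nhds ht)).exists
    exact ⟨n, hn.le⟩
  let n0 := Nat.find hex
  have hn0 : g n0 ≤ t := Nat.find_spec hex
  refine ⟨n0.primesBelow \ S, hgprime n0, Finset.sdiff_disjoint, ?_, hn0⟩
  rw [← hgdef]
  rcases Nat.eq_zero_or_pos n0 with h0 | hpos
  · have h1 : g n0 = 1 := by
      rw [hgdef]
      simp [h0, Nat.primesBelow]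
    rw [h1]; linarith
  · obtain ⟨m, hm⟩ := Nat.exists_eq_succ_of_ne_zero hpos.ne'
    have hmlt : t < g m := by
      have := Nat.find_min hex (m := m) (by omega)
      linarith [not_le.mp this]
    have hgm : (0:ℝ) ≤ g m := prod_primes_nonneg _ (hgprime m)
    have hstep : (1/2) * g m ≤ g n0 := by
      rw [hm, hgdef m.succ, Nat.primesBelow_succ]
      by_cases hmp : m.Prime
      · simp only [hmp, if_true]
        by_cases hmS : m ∈ S
        · rw [Finset.insert_sdiff_of_mem _ hmS, ← hgdef]
          nlinarith
        · rw [Finset.insert_sdiff_of_notMem _ hmS]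
          have hmnot : m ∉ m.primesBelow \ S := by
            intro h
            exact (Nat.lt_of_mem_primesBelow (Finset.mem_sdiff.mp h).1).false
          rw [Finset.prod_insert hmnot, ← hgdef]
          have h2 : (2:ℝ) ≤ (m:ℝ) := by exact_mod_cast hmp.two_le
          have hfac : (1/2:ℝ) ≤ 1 - 1/(m:ℝ) := by
            have : (1:ℝ)/m ≤ 1/2 :=
              div_le_div_of_nonneg_left (by norm_num) (by norm_num) h2
            linarith
          nlinarith
      · simp only [hmp, if_false]
        rw [← hgdef]
        nlinarith
    linarith
end
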